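/- Let R be a ring, n ≥ 1 an integer, and 𝒳 a class of left R-modules. For a left R-module M the following are equivalent: (1) M is n-𝒳-injective; (2) every short exact sequence 0 → M → A → C → 0 of left R-modules is special 𝒳-pure; (3) M is a special 𝒳-pure submodule of every injective left R-module containing it; (4) M is a special 𝒳-pure submodule of its injective envelope E(M). -/

import Mathlib

/- Common framework: `n`-presented modules, syzygies, special 𝒳-presented modules,
   Ext/Tor vanishing (Tor via a hand-rolled tensor product over a possibly
   noncommutative ring, since Mathlib's tensor product requires commutativity),
   `n`-𝒳-injective / `n`-𝒳-flat modules, and the Gorenstein versions. -/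

universe u
open CategoryTheory LinearMap DirectSum

section Basic

variable (R : Type u) [Ring R]

/-- `U` is an `n`-presented left `R`-module: there is an exact sequence
`F_n → ⋯ → F_0 → U → 0` with each `F_i` finitely generated free. -/
def IsNPresented : ℕ → ModuleCat.{u} R → Prop
  | 0, U => Module.Finite R U
  | n + 1, U => ∃ (F : ModuleCat.{u} R) (f : F →ₗ[R] U),
      Module.Free R F ∧ Module.Finite R F ∧ Function.Surjective f ∧
      IsNPresented n (ModuleCat.of R (LinearMap.ker f))

/-- `K` is a `j`-th syzygy of `U` computed from finitely generated free modules: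
`IsSyzygy 0 U K` iff `K ≅ U`, and a `(j+1)`-st syzygy of `U` is a `j`-th syzygy of the
kernel of a surjection from a finitely generated free module onto `U`. -/
def IsSyzygy : ℕ → ModuleCat.{u} R → ModuleCat.{u} R → Prop
  | 0, U, K => Nonempty (K ≃ₗ[R] U)
  | j + 1, U, K => ∃ (F : ModuleCat.{u} R) (f : F →ₗ[R] U),
      Module.Free R F ∧ Module.Finite R F ∧ Function.Surjective f ∧
      IsSyzygy j (ModuleCat.of R (LinearMap.ker f)) K

/-- `Ext_R^k(U, M) = 0`. -/
noncomputable def ExtVanishes (k : ℕ) (U M : ModuleCat.{u} R) : Prop :=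
  Subsingleton (((Ext ℤ (ModuleCat.{u} R) k).obj (Opposite.op U)).obj M)

variable (𝒳 : Set (ModuleCat.{u} R)) (n : ℕ)

/-- `K` is a special 𝒳-presented module: `K` is the image `K_{n-1} = Im(F_{n-1} → F_{n-2})`
arising from an `n`-presentation of some `U ∈ 𝒳` (with the convention `K = U` when `n = 1`),
i.e. `K` is an `(n-1)`-st syzygy of some `n`-presented `U ∈ 𝒳`. -/
def IsSpecialPresented (K : ModuleCat.{u} R) : Prop :=
  ∃ U ∈ 𝒳, IsNPresented R n U ∧ IsSyzygy R (n - 1) U K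

/-- `M` is an `n`-𝒳-injective left `R`-module: `Ext_R^n(U, M) = 0` for every
`n`-presented `U ∈ 𝒳`. -/
noncomputable def IsNXInjective (M : ModuleCat.{u} R) : Prop :=
  ∀ U ∈ 𝒳, IsNPresented R n U → ExtVanishes R n U M

/-- Projective dimension at most `m`. -/
def ProjDimLE : ℕ → ModuleCat.{u} R → Prop
  | 0, K => Module.Projective R K
  | m + 1, K => ∃ (P : ModuleCat.{u} R) (f : P →ₗ[R] K),
      Module.Projective R P ∧ Function.Surjective f ∧
      ProjDimLE m (ModuleCat.of R (LinearMap.ker f))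

/-- Finite projective dimension. -/
def HasFiniteProjDim (K : ModuleCat.{u} R) : Prop := ∃ m, ProjDimLE R m K

/-- `R` is left `n`-𝒳-coherent: every `n`-presented module in `𝒳` is `(n+1)`-presented. -/
def IsNXCoherent : Prop := ∀ U ∈ 𝒳, IsNPresented R n U → IsNPresented R (n + 1) U

/-- `M` has `n`-𝒳-injective dimension at most `m`:
`Ext_R^{n+i}(U, M) = 0` for all `i ≥ m + 1` and all `n`-presented `U ∈ 𝒳`. -/
noncomputable def NXInjDimLE (m : ℕ) (M : ModuleCat.{u} R) : Prop :=
  ∀ U ∈ 𝒳, IsNPresented R n U → ∀ i : ℕ, m + 1 ≤ i → ExtVanishes R (n + i) U M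

/-- `M` has finite `n`-𝒳-injective dimension. -/
noncomputable def HasFiniteNXInjDim (M : ModuleCat.{u} R) : Prop := ∃ m, NXInjDimLE R 𝒳 n m M

end Basic

section Tensor

variable (R : Type u) [Ring R]

/-- The defining relations of the tensor product `N ⊗_R U` of a right `R`-module `N`
with a left `R`-module `U`, inside `N ⊗_ℤ U`. -/
def tensorRel (N : Type u) [AddCommGroup N] [Module Rᵐᵒᵖ N]
    (U : Type u) [AddCommGroup U] [Module R U] : Submodule ℤ (TensorProduct ℤ N U) :=
  Submodule.span ℤ {x | ∃ (r : R) (a : N) (v : U),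
    x = (MulOpposite.op r • a) ⊗ₜ[ℤ] v - a ⊗ₜ[ℤ] (r • v)}

/-- The tensor product `N ⊗_R U` of a right `R`-module `N` with a left `R`-module `U`
over a (possibly noncommutative) ring `R`, as an abelian group. -/
abbrev RTensor (N : Type u) [AddCommGroup N] [Module Rᵐᵒᵖ N]
    (U : Type u) [AddCommGroup U] [Module R U] : Type u :=
  TensorProduct ℤ N U ⧸ tensorRel R N U

/-- Functoriality of `RTensor` in both variables. -/
noncomputable def rtmap {N N' : Type u} [AddCommGroup N] [Module Rᵐᵒᵖ N]
    [AddCommGroup N'] [Module Rᵐᵒᵖ N']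
    {U U' : Type u} [AddCommGroup U] [Module R U] [AddCommGroup U'] [Module R U']
    (g : N →ₗ[Rᵐᵒᵖ] N') (f : U →ₗ[R] U') :
    RTensor R N U →ₗ[ℤ] RTensor R N' U' :=
  Submodule.mapQ (tensorRel R N U) (tensorRel R N' U')
    (TensorProduct.map g.toAddMonoidHom.toIntLinearMap f.toAddMonoidHom.toIntLinearMap)
    (by
      rw [tensorRel, Submodule.span_le]
      rintro x ⟨r, a, v, rfl⟩
      simp only [SetLike.mem_coe, Submodule.mem_comap, map_sub, TensorProduct.map_tmul,
        AddMonoidHom.coe_toIntLinearMap, LinearMap.toAddMonoidHom_coe]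
      apply Submodule.subset_span
      exact ⟨r, g a, f v, by erw [map_sub, TensorProduct.map_tmul, TensorProduct.map_tmul]; simp⟩)

/-- A left `R`-module `M` is flat if `- ⊗_R M` preserves injections of right `R`-modules. -/
noncomputable def IsFlatModule (M : ModuleCat.{u} R) : Prop :=
  ∀ (A B : ModuleCat.{u} Rᵐᵒᵖ) (i : A →ₗ[Rᵐᵒᵖ] B), Function.Injective i →
    Function.Injective (rtmap R i (LinearMap.id (M := M)))

/-- A right `R`-module `N` is flat if `N ⊗_R -` preserves injections of left `R`-modules. -/
noncomputable def IsFlatRight (N : ModuleCat.{u} Rᵐᵒᵖ) : Prop :=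
  ∀ (A B : ModuleCat.{u} R) (i : A →ₗ[R] B), Function.Injective i →
    Function.Injective (rtmap R (LinearMap.id (M := N)) i)

/-- Flat dimension of a left `R`-module at most `m`. -/
noncomputable def FlatDimLE : ℕ → ModuleCat.{u} R → Prop
  | 0, K => IsFlatModule R K
  | m + 1, K => ∃ (P : ModuleCat.{u} R) (f : P →ₗ[R] K),
      IsFlatModule R P ∧ Function.Surjective f ∧
      FlatDimLE m (ModuleCat.of R (LinearMap.ker f))

/-- Finite flat dimension. -/
noncomputable def HasFiniteFlatDim (K : ModuleCat.{u} R) : Prop := ∃ m, FlatDimLE R m K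

variable (𝒳 : Set (ModuleCat.{u} R)) (n : ℕ)

/-- `Tor^R_k(N, U) = 0` for a right `R`-module `N` and a left `R`-module `U`, `k ≥ 1`:
by dimension shifting this says that for every `(k-1)`-st syzygy `K` of `U` and every
surjection `f : F → K` with `F` free, the induced map `N ⊗ ker f → N ⊗ F` is injective. -/
noncomputable def TorVanishes (k : ℕ) (N : ModuleCat.{u} Rᵐᵒᵖ) (U : ModuleCat.{u} R) : Prop :=
  ∀ (K : ModuleCat.{u} R), IsSyzygy R (k - 1) U K →
    ∀ (F : ModuleCat.{u} R) (f : F →ₗ[R] K), Module.Free R F → Function.Surjective f →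
      Function.Injective
        (rtmap R (LinearMap.id (M := N)) (LinearMap.ker f).subtype)

/-- `N` is an `n`-𝒳-flat right `R`-module: `Tor^R_n(N, U) = 0` for every
`n`-presented `U ∈ 𝒳`. -/
noncomputable def IsNXFlat (N : ModuleCat.{u} Rᵐᵒᵖ) : Prop :=
  ∀ U ∈ 𝒳, IsNPresented R n U → TorVanishes R n N U

/-- `N` has `n`-𝒳-flat dimension at most `m`:
`Tor^R_{n+i}(N, U) = 0` for all `i ≥ m + 1` and all `n`-presented `U ∈ 𝒳`. -/
noncomputable def NXFlatDimLE (m : ℕ) (N : ModuleCat.{u} Rᵐᵒᵖ) : Prop :=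
  ∀ U ∈ 𝒳, IsNPresented R n U → ∀ i : ℕ, m + 1 ≤ i → TorVanishes R (n + i) N U

/-- `N` has finite `n`-𝒳-flat dimension. -/
noncomputable def HasFiniteNXFlatDim (N : ModuleCat.{u} Rᵐᵒᵖ) : Prop := ∃ m, NXFlatDimLE R 𝒳 n m N

end Tensor

section Pure

variable (R : Type u) [Ring R] (𝒳 : Set (ModuleCat.{u} R)) (n : ℕ)

/-- A short exact sequence `0 → A → B → C → 0` of left `R`-modules (given by `i` and `p`)
is special 𝒳-pure if `0 → Hom(K, A) → Hom(K, B) → Hom(K, C) → 0` is exact for every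
special 𝒳-presented module `K`. -/
def IsSpecialXPure {A B C : Type u} [AddCommGroup A] [Module R A] [AddCommGroup B] [Module R B]
    [AddCommGroup C] [Module R C] (i : A →ₗ[R] B) (p : B →ₗ[R] C) : Prop :=
  ∀ K : ModuleCat.{u} R, IsSpecialPresented R 𝒳 n K →
    Function.Injective (fun g : K →ₗ[R] A => i.comp g) ∧
    Function.Exact (fun g : K →ₗ[R] A => i.comp g) (fun g : K →ₗ[R] B => p.comp g) ∧
    Function.Surjective (fun g : K →ₗ[R] B => p.comp g)

/-- A short exact sequence `0 → A → B → C → 0` of right `R`-modules (given by `i` and `p`)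
is special 𝒳-pure if `0 → A ⊗ K → B ⊗ K → C ⊗ K → 0` is exact for every special
𝒳-presented (left `R`-) module `K`. -/
noncomputable def IsSpecialXPureRight {A B C : Type u}
    [AddCommGroup A] [Module Rᵐᵒᵖ A] [AddCommGroup B] [Module Rᵐᵒᵖ B]
    [AddCommGroup C] [Module Rᵐᵒᵖ C] (i : A →ₗ[Rᵐᵒᵖ] B) (p : B →ₗ[Rᵐᵒᵖ] C) : Prop :=
  ∀ K : ModuleCat.{u} R, IsSpecialPresented R 𝒳 n K →
    Function.Injective (rtmap R i (LinearMap.id (M := K))) ∧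
    Function.Exact (rtmap R i (LinearMap.id (M := K))) (rtmap R p (LinearMap.id (M := K))) ∧
    Function.Surjective (rtmap R p (LinearMap.id (M := K)))

/-- `R` is self left `n`-𝒳-injective. -/
noncomputable def IsSelfNXInjective : Prop := IsNXInjective R 𝒳 n (ModuleCat.of R R)

end Pure

section Gorenstein

variable (R : Type u) [Ring R] (𝒳 : Set (ModuleCat.{u} R)) (n : ℕ)

/-- `G` is a Gorenstein `n`-𝒳-injective left `R`-module: there is an exact complex
`⋯ → A_1 → A_0 → A^0 → A^1 → ⋯` of `n`-𝒳-injective modules with `G = ker(A^0 → A^1)`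
which stays exact under `Hom_R(K, -)` for every special 𝒳-presented `K` of finite
projective dimension. -/
noncomputable def IsGorNXInjective (G : ModuleCat.{u} R) : Prop :=
  ∃ (C : ℤ → ModuleCat.{u} R) (d : ∀ i : ℤ, C i →ₗ[R] C (i - 1)),
    (∀ i, IsNXInjective R 𝒳 n (C i)) ∧
    (∀ i : ℤ, Function.Exact (d i) (d (i - 1))) ∧
    Nonempty (G ≃ₗ[R] LinearMap.ker (d 0)) ∧
    (∀ K : ModuleCat.{u} R, IsSpecialPresented R 𝒳 n K → HasFiniteProjDim R K →
      ∀ i : ℤ, Function.Exact (fun g : K →ₗ[R] C i => (d i).comp g)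
        (fun g : K →ₗ[R] C (i - 1) => (d (i - 1)).comp g))

/-- `G` is a Gorenstein `n`-𝒳-flat right `R`-module: there is an exact complex
`⋯ → F_1 → F_0 → F^0 → F^1 → ⋯` of `n`-𝒳-flat right modules with `G = ker(F^0 → F^1)`
which stays exact under `- ⊗_R K` for every special 𝒳-presented `K` of finite
flat dimension. -/
noncomputable def IsGorNXFlat (G : ModuleCat.{u} Rᵐᵒᵖ) : Prop :=
  ∃ (C : ℤ → ModuleCat.{u} Rᵐᵒᵖ) (d : ∀ i : ℤ, C i →ₗ[Rᵐᵒᵖ] C (i - 1)),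
    (∀ i, IsNXFlat R 𝒳 n (C i)) ∧
    (∀ i : ℤ, Function.Exact (d i) (d (i - 1))) ∧
    Nonempty (G ≃ₗ[Rᵐᵒᵖ] LinearMap.ker (d 0)) ∧
    (∀ K : ModuleCat.{u} R, IsSpecialPresented R 𝒳 n K → HasFiniteFlatDim R K →
      ∀ i : ℤ, Function.Exact (rtmap R (d i) (LinearMap.id (M := K)))
        (rtmap R (d (i - 1)) (LinearMap.id (M := K))))

end Gorenstein

section GorensteinAbsolute

/-- `G` is a Gorenstein injective module over `S`: there is an exact complex of injective
modules with `G = ker(E^0 → E^1)` which stays exact under `Hom(I, -)` for every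
injective module `I`. -/
noncomputable def IsGorensteinInjective (S : Type u) [Ring S] (G : ModuleCat.{u} S) : Prop :=
  ∃ (C : ℤ → ModuleCat.{u} S) (d : ∀ i : ℤ, C i →ₗ[S] C (i - 1)),
    (∀ i, Module.Injective S (C i)) ∧
    (∀ i : ℤ, Function.Exact (d i) (d (i - 1))) ∧
    Nonempty (G ≃ₗ[S] LinearMap.ker (d 0)) ∧
    (∀ I : ModuleCat.{u} S, Module.Injective S I →
      ∀ i : ℤ, Function.Exact (fun g : I →ₗ[S] C i => (d i).comp g)
        (fun g : I →ₗ[S] C (i - 1) => (d (i - 1)).comp g))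

/-- `G` is a Gorenstein projective module over `S`: there is an exact complex of projective
modules with `G = ker(P^0 → P^1)` which stays exact under `Hom(-, Q)` for every
projective module `Q`. -/
def IsGorensteinProjective (S : Type u) [Ring S] (G : ModuleCat.{u} S) : Prop :=
  ∃ (C : ℤ → ModuleCat.{u} S) (d : ∀ i : ℤ, C i →ₗ[S] C (i - 1)),
    (∀ i, Module.Projective S (C i)) ∧
    (∀ i : ℤ, Function.Exact (d i) (d (i - 1))) ∧
    Nonempty (G ≃ₗ[S] LinearMap.ker (d 0)) ∧
    (∀ Q : ModuleCat.{u} S, Module.Projective S Q →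
      ∀ i : ℤ, Function.Exact (fun g : C (i - 1 - 1) →ₗ[S] Q => g.comp (d (i - 1)))
        (fun g : C (i - 1) →ₗ[S] Q => g.comp (d i)))

variable (R : Type u) [Ring R]

/-- `G` is a Gorenstein flat left `R`-module: there is an exact complex of flat left modules
with `G = ker(F^0 → F^1)` which stays exact under `E ⊗_R -` for every injective right
`R`-module `E`. -/
noncomputable def IsGorensteinFlatLeft (G : ModuleCat.{u} R) : Prop :=
  ∃ (C : ℤ → ModuleCat.{u} R) (d : ∀ i : ℤ, C i →ₗ[R] C (i - 1)),
    (∀ i, IsFlatModule R (C i)) ∧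
    (∀ i : ℤ, Function.Exact (d i) (d (i - 1))) ∧
    Nonempty (G ≃ₗ[R] LinearMap.ker (d 0)) ∧
    (∀ E : ModuleCat.{u} Rᵐᵒᵖ, Module.Injective Rᵐᵒᵖ E →
      ∀ i : ℤ, Function.Exact (rtmap R (LinearMap.id (M := E)) (d i))
        (rtmap R (LinearMap.id (M := E)) (d (i - 1))))

/-- `G` is a Gorenstein flat right `R`-module: there is an exact complex of flat right modules
with `G = ker(F^0 → F^1)` which stays exact under `- ⊗_R E` for every injective left
`R`-module `E`. -/
noncomputable def IsGorensteinFlatRight (G : ModuleCat.{u} Rᵐᵒᵖ) : Prop :=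
  ∃ (C : ℤ → ModuleCat.{u} Rᵐᵒᵖ) (d : ∀ i : ℤ, C i →ₗ[Rᵐᵒᵖ] C (i - 1)),
    (∀ i, IsFlatRight R (C i)) ∧
    (∀ i : ℤ, Function.Exact (d i) (d (i - 1))) ∧
    Nonempty (G ≃ₗ[Rᵐᵒᵖ] LinearMap.ker (d 0)) ∧
    (∀ E : ModuleCat.{u} R, Module.Injective R E →
      ∀ i : ℤ, Function.Exact (rtmap R (d i) (LinearMap.id (M := E)))
        (rtmap R (d (i - 1)) (LinearMap.id (M := E))))

end GorensteinAbsolute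

/-! Write `n = m + 1`, and for `U ∈ 𝒳_n` let `K` be an `m`-th syzygy with a free cover
`π : F → K`. Dimension shifting identifies `Ext^n(U, M) = 0` with the extendability of every
map `ker π → M` to `F`. As `Hom(K, -)` is left exact, special 𝒳-purity of `0 → M → A → C → 0`
only asks that maps `K → C` lift to `A`. Given extendability, such a lift is obtained by lifting
`F → K → C` through the projective `F` and correcting it on `ker π`; conversely, when `A` is
injective, lifts of maps `K → A ⧸ M` produce the extensions. Finally `M` does have an injective
envelope: a maximal essential extension of `M` inside an injective module is a direct summand. -/

universe v

section HomSequence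

variable {R : Type*} [Ring R] {M A C F K : Type*}
  [AddCommGroup M] [Module R M] [AddCommGroup A] [Module R A] [AddCommGroup C] [Module R C]
  [AddCommGroup F] [Module R F] [AddCommGroup K] [Module R K]

lemma LinearMap.exists_comp_eq_of_ker_le {π : F →ₗ[R] K} (hπ : Function.Surjective π)
    {g : F →ₗ[R] A} (h : ker π ≤ ker g) : ∃ g' : K →ₗ[R] A, g' ∘ₗ π = g :=
  ⟨(ker π).liftQ g h ∘ₗ (π.quotKerEquivOfSurjective hπ).symm.toLinearMap, by
    ext x
    simp [quotKerEquivOfSurjective_symm_apply]⟩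

lemma Function.Exact.exists_comp_eq_of_comp_eq_zero {i : M →ₗ[R] A} {p : A →ₗ[R] C}
    (hip : Function.Exact i p) (hi : Function.Injective i) {y : K →ₗ[R] A} (hy : p ∘ₗ y = 0) :
    ∃ y' : K →ₗ[R] M, i ∘ₗ y' = y :=
  ⟨(LinearEquiv.ofInjective i hi).symm.toLinearMap ∘ₗ
      y.codRestrict (range i) fun x => (hip (y x)).mp congr($hy x), by
    ext x
    exact LinearEquiv.ofInjective_symm_apply (h := hi) i _⟩

lemma Function.Exact.postcomp {i : M →ₗ[R] A} {p : A →ₗ[R] C} (hip : Function.Exact i p)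
    (hi : Function.Injective i) :
    Function.Exact (fun g : K →ₗ[R] M => i ∘ₗ g) (fun g : K →ₗ[R] A => p ∘ₗ g) := by
  intro y
  refine ⟨fun hy => hip.exists_comp_eq_of_comp_eq_zero hi hy, ?_⟩
  rintro ⟨y', rfl⟩
  show p ∘ₗ i ∘ₗ y' = 0
  rw [← LinearMap.comp_assoc, hip.linearMap_comp_eq_zero, zero_comp]

end HomSequence

lemma isSpecialXPure_iff_forall_surjective {R : Type u} [Ring R] {𝒳 : Set (ModuleCat.{u} R)}
    {n : ℕ} {A B C : Type u} [AddCommGroup A] [Module R A] [AddCommGroup B] [Module R B]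
    [AddCommGroup C] [Module R C] {i : A →ₗ[R] B} {p : B →ₗ[R] C} (hip : Function.Exact i p)
    (hi : Function.Injective i) :
    IsSpecialXPure R 𝒳 n i p ↔ ∀ K : ModuleCat.{u} R, IsSpecialPresented R 𝒳 n K →
      Function.Surjective fun g : K →ₗ[R] B => p ∘ₗ g :=
  ⟨fun h K hK => (h K hK).2.2,
    fun h K hK => ⟨fun _ _ hg => (cancel_left hi).mp hg, hip.postcomp hi, h K hK⟩⟩

section Lifting

variable {R : Type*} [Ring R] {M A C F K : Type v}
  [AddCommGroup M] [Module R M] [AddCommGroup A] [Module R A] [AddCommGroup C] [Module R C]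
  [AddCommGroup F] [Module R F] [AddCommGroup K] [Module R K]
  {i : M →ₗ[R] A} {p : A →ₗ[R] C} {π : F →ₗ[R] K}

lemma Function.Exact.exists_comp_eq_of_surjective_restrict [Module.Projective R F]
    (hip : Function.Exact i p) (hi : Function.Injective i) (hp : Function.Surjective p)
    (hπ : Function.Surjective π)
    (hext : Function.Surjective fun h : F →ₗ[R] M => h ∘ₗ (ker π).subtype) (g : K →ₗ[R] C) :
    ∃ g' : K →ₗ[R] A, p ∘ₗ g' = g := by
  obtain ⟨h, hh⟩ := Module.projective_lifting_property p (g ∘ₗ π) hp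
  have hker : p ∘ₗ h ∘ₗ (ker π).subtype = 0 := by
    ext x
    simp [← LinearMap.comp_apply p h, hh]
  obtain ⟨y, hy⟩ := hip.exists_comp_eq_of_comp_eq_zero hi hker
  obtain ⟨ψ, rfl⟩ := hext y
  obtain ⟨g', hg'⟩ := exists_comp_eq_of_ker_le hπ (g := h - i ∘ₗ ψ) fun x hx => by
    simpa [sub_eq_zero] using congr($hy ⟨x, hx⟩).symm
  refine ⟨g', (cancel_right hπ).mp ?_⟩
  rw [LinearMap.comp_assoc, hg', comp_sub, ← LinearMap.comp_assoc, hip.linearMap_comp_eq_zero,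
    zero_comp, sub_zero, hh]

lemma Function.Exact.surjective_restrict_of_exists_comp_eq [Module.Injective R A]
    (hip : Function.Exact i p) (hi : Function.Injective i) (hπ : Function.Surjective π)
    (hlift : ∀ g : K →ₗ[R] C, ∃ g' : K →ₗ[R] A, p ∘ₗ g' = g) :
    Function.Surjective fun h : F →ₗ[R] M => h ∘ₗ (ker π).subtype := by
  intro φ
  obtain ⟨h, hh⟩ := Module.Injective.out (ker π).subtype (ker π).injective_subtype (i ∘ₗ φ)
  obtain ⟨g, hg⟩ := exists_comp_eq_of_ker_le hπ (g := p ∘ₗ h) fun x hx => by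
    simp [show h x = i (φ ⟨x, hx⟩) from hh ⟨x, hx⟩, hip.apply_apply_eq_zero]
  obtain ⟨g', hg'⟩ := hlift g
  obtain ⟨ψ, hψ⟩ := hip.exists_comp_eq_of_comp_eq_zero hi (y := h - g' ∘ₗ π) (by
    rw [comp_sub, ← LinearMap.comp_assoc, hg', hg, sub_self])
  refine ⟨ψ, (cancel_left hi).mp ?_⟩
  ext x
  simpa [← LinearMap.comp_apply i ψ, hψ] using hh x

end Lifting

section Resolutions

variable {R : Type u} [Ring R]

noncomputable def freeCover (W : ModuleCat.{u} R) : (W →₀ R) →ₗ[R] W :=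
  Finsupp.linearCombination R id

lemma freeCover_surjective (W : ModuleCat.{u} R) : Function.Surjective (freeCover W) :=
  Finsupp.linearCombination_id_surjective R W

lemma exact_subtype_comp_freeCover (W : ModuleCat.{u} R) :
    Function.Exact ((ker (freeCover W)).subtype ∘ₗ freeCover (ModuleCat.of R (ker (freeCover W))))
      (freeCover W) :=
  (freeCover_surjective _).comp_exact_iff_exact.mpr (exact_subtype_ker_map _)

structure ModuleResolution (U : ModuleCat.{u} R) where
  X : ℕ → ModuleCat.{u} R
  d : ∀ i, X (i + 1) →ₗ[R] X i
  ε : X 0 →ₗ[R] U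
  projective : ∀ i, Module.Projective R (X i)
  ε_surjective : Function.Surjective ε
  exact_zero : Function.Exact (d 0) ε
  exact_succ : ∀ i, Function.Exact (d (i + 1)) (d i)

namespace ModuleResolution

variable {U M : ModuleCat.{u} R} (P : ModuleResolution U)

noncomputable def complex : ChainComplex (ModuleCat.{u} R) ℕ :=
  ChainComplex.of P.X (fun i => ModuleCat.ofHom (P.d i))
    (fun i => ModuleCat.hom_ext (LinearMap.ext fun x => (P.exact_succ i).apply_apply_eq_zero x))

lemma complex_d (i : ℕ) : P.complex.d (i + 1) i = ModuleCat.ofHom (P.d i) :=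
  ChainComplex.of_d P.X (fun i => ModuleCat.ofHom (P.d i)) i

lemma complex_exactAt_succ (i : ℕ) : P.complex.ExactAt (i + 1) := by
  rw [HomologicalComplex.exactAt_iff' _ (i + 2) (i + 1) i (by simp) (by simp),
    ShortComplex.moduleCat_exact_iff]
  intro x hx
  obtain ⟨y, hy⟩ := (P.exact_succ i x).mp (by
    simp only [HomologicalComplex.shortComplexFunctor'_obj_g, complex_d] at hx; exact hx)
  exact ⟨y, by simp only [HomologicalComplex.shortComplexFunctor'_obj_f, complex_d]; exact hy⟩

noncomputable def toProjectiveResolution : ProjectiveResolution U where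
  complex := P.complex
  projective i := by
    have := P.projective i
    exact (IsProjective.iff_projective (R := R) (P := P.X i)).mp inferInstance
  π := (ChainComplex.toSingle₀Equiv _ _).symm ⟨ModuleCat.ofHom P.ε, by
    ext x
    exact P.exact_zero.apply_apply_eq_zero x⟩
  quasiIso := ⟨fun i => by
    cases i with
    | zero =>
      rw [ChainComplex.quasiIsoAt₀_iff, ShortComplex.quasiIso_iff_of_zeros' _ rfl rfl rfl]
      refine ⟨(ShortComplex.moduleCat_exact_iff _).mpr fun x hx => ?_,
        (ModuleCat.epi_iff_surjective _).mpr fun x => ?_⟩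
      · obtain ⟨y, hy⟩ := (P.exact_zero x).mp (by
          simp only [ChainComplex.toSingle₀Equiv, Equiv.symm_mk, Equiv.coe_fn_mk,
            HomologicalComplex.shortComplexFunctor'_map_τ₂] at hx
          exact hx)
        exact ⟨y, by
          simp only [HomologicalComplex.shortComplexFunctor'_obj_f, complex_d]; exact hy⟩
      · obtain ⟨y, hy⟩ := P.ε_surjective x
        exact ⟨y, by
          simp only [ChainComplex.toSingle₀Equiv, Equiv.symm_mk, Equiv.coe_fn_mk,
            HomologicalComplex.shortComplexFunctor'_map_τ₂]
          exact hy⟩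
    | succ i =>
      rw [quasiIsoAt_iff_exactAt' _ _ (ChainComplex.exactAt_succ_single_obj _ _)]
      exact P.complex_exactAt_succ i⟩

/-- Exactness of `Hom(P, M)` at `Hom(X (k + 1), M)`. -/
def HomExactAt (M : ModuleCat.{u} R) (k : ℕ) : Prop :=
  ∀ g : P.X (k + 1) →ₗ[R] M, g ∘ₗ P.d (k + 1) = 0 → ∃ h : P.X k →ₗ[R] M, h ∘ₗ P.d k = g

lemma extVanishes_succ_iff (k : ℕ) : ExtVanishes R (k + 1) U M ↔ P.HomExactAt M k := by
  rw [ExtVanishes, ← ModuleCat.isZero_iff_subsingleton,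
    (P.toProjectiveResolution.isoExt (k + 1) M).isZero_iff,
    ← HomologicalComplex.exactAt_iff_isZero_homology,
    HomologicalComplex.exactAt_iff' _ k (k + 1) (k + 2) (by simp) (by simp),
    ShortComplex.moduleCat_exact_iff]
  refine ⟨fun H g hg => ?_, fun H g hg => ?_⟩
  · obtain ⟨h, hh⟩ := H (ModuleCat.ofHom g) (by
      show P.complex.d (k + 2) (k + 1) ≫ ModuleCat.ofHom g = 0
      rw [P.complex_d]
      ext x
      exact LinearMap.congr_fun hg x)
    refine ⟨h.hom, ?_⟩
    have : P.complex.d (k + 1) k ≫ h = ModuleCat.ofHom g := hh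
    rw [P.complex_d] at this
    exact congr(ModuleCat.Hom.hom $this)
  · have hg' : P.complex.d (k + 2) (k + 1) ≫ g = 0 := hg
    rw [P.complex_d] at hg'
    obtain ⟨h, hh⟩ := H g.hom congr(ModuleCat.Hom.hom $hg')
    refine ⟨ModuleCat.ofHom h, ?_⟩
    show P.complex.d (k + 1) k ≫ ModuleCat.ofHom h = g
    rw [P.complex_d]
    ext x
    exact LinearMap.congr_fun hh x

noncomputable def cons {F : Type u} [AddCommGroup F] [Module R F] [Module.Projective R F]
    (π : F →ₗ[R] U) (hπ : Function.Surjective π) (Q : ModuleResolution (ModuleCat.of R (ker π))) :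
    ModuleResolution U where
  X
    | 0 => ModuleCat.of R F
    | i + 1 => Q.X i
  d
    | 0 => (ker π).subtype ∘ₗ Q.ε
    | i + 1 => Q.d i
  ε := π
  projective
    | 0 => ‹_›
    | i + 1 => Q.projective i
  ε_surjective := hπ
  exact_zero := Q.ε_surjective.comp_exact_iff_exact.mpr (exact_subtype_ker_map π)
  exact_succ
    | 0 => (ker π).injective_subtype.comp_exact_iff_exact.mpr Q.exact_zero
    | i + 1 => Q.exact_succ i

lemma cons_homExactAt_succ {F : Type u} [AddCommGroup F] [Module R F] [Module.Projective R F]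
    {π : F →ₗ[R] U} {hπ : Function.Surjective π} {Q : ModuleResolution (ModuleCat.of R (ker π))}
    {k : ℕ} : (cons π hπ Q).HomExactAt M (k + 1) ↔ Q.HomExactAt M k :=
  Iff.rfl

lemma cons_homExactAt_zero_iff {F : Type u} [AddCommGroup F] [Module R F]
    [Module.Projective R F] {π : F →ₗ[R] U} {hπ : Function.Surjective π}
    {Q : ModuleResolution (ModuleCat.of R (ker π))} :
    (cons π hπ Q).HomExactAt M 0 ↔
      Function.Surjective fun h : F →ₗ[R] M => h ∘ₗ (ker π).subtype := by
  show (∀ g : Q.X 0 →ₗ[R] M, g ∘ₗ Q.d 0 = 0 →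
    ∃ h : F →ₗ[R] M, h ∘ₗ (ker π).subtype ∘ₗ Q.ε = g) ↔ _
  refine ⟨fun H φ => ?_, fun H g hg => ?_⟩
  · obtain ⟨h, hh⟩ := H (φ ∘ₗ Q.ε) (by
      rw [LinearMap.comp_assoc, Q.exact_zero.linearMap_comp_eq_zero, comp_zero])
    exact ⟨h, (cancel_right Q.ε_surjective).mp hh⟩
  · obtain ⟨φ, rfl⟩ := exists_comp_eq_of_ker_le Q.ε_surjective (g := g) (by
      rw [Q.exact_zero.linearMap_ker_eq, range_le_ker_iff]; exact hg)
    obtain ⟨h, rfl⟩ := H φ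
    exact ⟨h, rfl⟩

noncomputable def congr {U' : ModuleCat.{u} R} (e : U ≃ₗ[R] U') : ModuleResolution U' where
  X := P.X
  d := P.d
  ε := e.toLinearMap ∘ₗ P.ε
  projective := P.projective
  ε_surjective := e.surjective.comp P.ε_surjective
  exact_zero := e.postcomp_exact_iff_exact.mpr P.exact_zero
  exact_succ := P.exact_succ

noncomputable def standardSyzygy (U : ModuleCat.{u} R) : ℕ → ModuleCat.{u} R
  | 0 => U
  | i + 1 => ModuleCat.of R (ker (freeCover (standardSyzygy U i)))

noncomputable def standard (U : ModuleCat.{u} R) : ModuleResolution U where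
  X i := ModuleCat.of R (standardSyzygy U i →₀ R)
  d i := (ker (freeCover (standardSyzygy U i))).subtype ∘ₗ freeCover (standardSyzygy U (i + 1))
  ε := freeCover U
  projective _ := inferInstanceAs (Module.Projective R (_ →₀ R))
  ε_surjective := freeCover_surjective U
  exact_zero := exact_subtype_comp_freeCover U
  exact_succ _ := (Submodule.injective_subtype _).comp_exact_iff_exact.mpr
    (exact_subtype_comp_freeCover _)

end ModuleResolution

end Resolutions

section Syzygies

variable {R : Type u} [Ring R]

lemma IsNPresented.of_succ : ∀ {m : ℕ} {U : ModuleCat.{u} R},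
    IsNPresented R (m + 1) U → IsNPresented R m U
  | 0, _, ⟨_, f, _, _, hf, _⟩ => Module.Finite.of_surjective f hf
  | _ + 1, _, ⟨F, f, hF, hFfin, hf, hker⟩ => ⟨F, f, hF, hFfin, hf, hker.of_succ⟩

lemma IsNPresented.exists_isSyzygy : ∀ {m : ℕ} {U : ModuleCat.{u} R},
    IsNPresented R m U → ∃ K, IsSyzygy R m U K
  | 0, U, _ => ⟨U, ⟨LinearEquiv.refl R U⟩⟩
  | _ + 1, _, ⟨F, f, hF, hFfin, hf, hker⟩ =>
    let ⟨K, hK⟩ := hker.exists_isSyzygy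
    ⟨K, F, f, hF, hFfin, hf, hK⟩

lemma IsSyzygy.exists_moduleResolution (M : ModuleCat.{u} R) : ∀ {m : ℕ} {U K : ModuleCat.{u} R},
    IsSyzygy R m U K → ∀ Q : ModuleResolution K,
      ∃ P : ModuleResolution U, P.HomExactAt M m ↔ Q.HomExactAt M 0
  | 0, _, _, ⟨e⟩, Q => ⟨Q.congr e, Iff.rfl⟩
  | _ + 1, _, _, ⟨F, f, hF, _, hf, hK⟩, Q => by
    have : Module.Projective R F := Module.Projective.of_free
    obtain ⟨P, hP⟩ := hK.exists_moduleResolution M Q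
    exact ⟨.cons f hf P, ModuleResolution.cons_homExactAt_succ.trans hP⟩

theorem IsSyzygy.extVanishes_succ_iff {M : ModuleCat.{u} R} {m : ℕ} {U K : ModuleCat.{u} R}
    (hK : IsSyzygy R m U K) {F : Type u} [AddCommGroup F] [Module R F] [Module.Projective R F]
    {π : F →ₗ[R] K} (hπ : Function.Surjective π) :
    ExtVanishes R (m + 1) U M ↔ Function.Surjective fun h : F →ₗ[R] M => h ∘ₗ (ker π).subtype := by
  obtain ⟨P, hP⟩ := hK.exists_moduleResolution M (.cons π hπ (.standard _))
  rw [P.extVanishes_succ_iff, hP, ModuleResolution.cons_homExactAt_zero_iff]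

end Syzygies

section Essential

variable {R : Type*} [Ring R] {E : Type v} [AddCommGroup E] [Module R E]

def Submodule.IsEssentialIn (M₀ N : Submodule R E) : Prop :=
  M₀ ≤ N ∧ ∀ x ∈ N, x ≠ 0 → ∃ r : R, r • x ∈ M₀ ∧ r • x ≠ 0

lemma Submodule.isEssentialIn_refl (M₀ : Submodule R E) : M₀.IsEssentialIn M₀ :=
  ⟨le_rfl, fun x hx hx0 => ⟨1, by simpa using hx, by simpa using hx0⟩⟩

lemma Submodule.exists_maximal_isEssentialIn (M₀ : Submodule R E) :
    ∃ H, Maximal M₀.IsEssentialIn H := by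
  obtain ⟨H, -, hH⟩ := zorn_le_nonempty₀ {N | M₀.IsEssentialIn N} (fun c hc hchain N hN => by
    refine ⟨sSup c, ⟨(hc hN).1.trans (le_sSup hN), fun x hx hx0 => ?_⟩, fun _ => le_sSup⟩
    obtain ⟨N', hN', hxN'⟩ := (Submodule.mem_sSup_of_directed ⟨N, hN⟩ hchain.directedOn).mp hx
    exact (hc hN').2 x hxN' hx0) M₀ M₀.isEssentialIn_refl
  exact ⟨H, hH⟩

lemma Submodule.exists_maximal_disjoint (H : Submodule R E) : ∃ C, Maximal (Disjoint H) C := by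
  obtain ⟨C, -, hC⟩ := zorn_le_nonempty₀ {C | Disjoint H C} (fun c hc hchain N hN =>
    ⟨sSup c, (hchain.directedOn.disjoint_sSup_right).mpr fun _ hb => hc hb,
      fun _ => le_sSup⟩) ⊥ disjoint_bot_right
  exact ⟨C, hC⟩

lemma Submodule.isEssentialIn_range_mkQ_comp_subtype {H C : Submodule R E}
    (hC : Maximal (Disjoint H) C) : (range (C.mkQ ∘ₗ H.subtype)).IsEssentialIn ⊤ := by
  refine ⟨le_top, fun z _ hz => ?_⟩
  obtain ⟨x, rfl⟩ := C.mkQ_surjective z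
  have hxC : x ∉ C := fun hx => hz ((Submodule.Quotient.mk_eq_zero C).mpr hx)
  have hmeet : ¬ Disjoint H (C ⊔ R ∙ x) := fun h =>
    hxC (hC.2 h le_sup_left (Submodule.mem_sup_right (Submodule.mem_span_singleton_self x)))
  obtain ⟨v, hv, hv0⟩ := Submodule.exists_mem_ne_zero_of_ne_bot (disjoint_iff.not.mp hmeet)
  obtain ⟨hvH, hvCx⟩ := Submodule.mem_inf.mp hv
  obtain ⟨c, hc, w, hw, rfl⟩ := Submodule.mem_sup.mp hvCx
  obtain ⟨r, rfl⟩ := Submodule.mem_span_singleton.mp hw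
  have hmk : C.mkQ (c + r • x) = r • C.mkQ x := by
    rw [map_add, map_smul, Submodule.mkQ_apply C c, (Submodule.Quotient.mk_eq_zero C).mpr hc,
      zero_add]
  refine ⟨r, ⟨⟨_, hvH⟩, hmk⟩, fun h0 => hv0 ?_⟩
  rw [← hmk, Submodule.mkQ_apply, Submodule.Quotient.mk_eq_zero] at h0
  exact (disjoint_def.mp hC.1) _ hvH h0

lemma Module.Injective.of_retraction {H : Type v} [AddCommGroup H] [Module R H]
    [Module.Injective R E] (s : H →ₗ[R] E) (r : E →ₗ[R] H) (hrs : r ∘ₗ s = .id) :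
    Module.Injective R H where
  out X Y _ _ _ _ f hf g := by
    obtain ⟨h, hh⟩ := Module.Injective.out f hf (s ∘ₗ g)
    exact ⟨r ∘ₗ h, fun x => by simp [hh, ← LinearMap.comp_apply r s, hrs]⟩

/-- `H` is a retract of `E`, through `E ⧸ C` for a maximal `C` disjoint from `H`. -/
lemma Submodule.injective_of_maximal_isEssentialIn [Module.Injective R E] {M₀ H : Submodule R E}
    (hH : Maximal M₀.IsEssentialIn H) : Module.Injective R H := by
  obtain ⟨C, hC⟩ := H.exists_maximal_disjoint
  have hess := Submodule.isEssentialIn_range_mkQ_comp_subtype hC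
  set ψ := C.mkQ ∘ₗ H.subtype
  have hψ : Function.Injective ψ := by
    rw [← LinearMap.ker_eq_bot, LinearMap.ker_comp, Submodule.ker_mkQ, eq_bot_iff]
    intro h hh
    exact Subtype.ext ((disjoint_def.mp hC.1) _ h.2 hh)
  obtain ⟨φ, hφ⟩ := Module.Injective.out ψ hψ H.subtype
  have hφ_inj : Function.Injective φ := by
    rw [← LinearMap.ker_eq_bot, eq_bot_iff]
    intro z hz
    by_contra hz0
    obtain ⟨r, ⟨h, hh⟩, hr0⟩ := hess.2 z trivial (by simpa using hz0)
    have : H.subtype h = 0 := by rw [← hφ, hh, map_smul, LinearMap.mem_ker.mp hz, smul_zero]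
    exact hr0 (by rw [← hh, show h = 0 from Subtype.ext this, map_zero])
  have hHφ : H ≤ range φ := fun h hh => ⟨ψ ⟨h, hh⟩, hφ _⟩
  have hφH : range φ ≤ H := by
    refine hH.2 ⟨hH.1.1.trans hHφ, ?_⟩ hHφ
    rintro _ ⟨z, rfl⟩ hz0
    obtain ⟨r, ⟨h, hh⟩, hr0⟩ := hess.2 z trivial (fun h => hz0 (by rw [h, map_zero]))
    have hrφ : r • φ z = h := by rw [← map_smul, ← hh, hφ]; rfl
    obtain ⟨s, hs, hs0⟩ := hH.1.2 _ h.2 (by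
      rw [← hrφ, ← map_smul]; exact fun h0 => hr0 (hφ_inj (by rw [h0, map_zero])))
    exact ⟨s * r, by rwa [mul_smul, hrφ], by rwa [mul_smul, hrφ]⟩
  refine Module.Injective.of_retraction H.subtype
    ((φ ∘ₗ C.mkQ).codRestrict H fun x => hφH ⟨_, rfl⟩) ?_
  ext h
  exact hφ h

lemma Submodule.IsEssentialIn.inf_comap_subtype_ne_bot {M₀ N : Submodule R E}
    (h : M₀.IsEssentialIn N) {S : Submodule R N} (hS : S ≠ ⊥) :
    S ⊓ M₀.comap N.subtype ≠ ⊥ := by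
  obtain ⟨x, hxS, hx0⟩ := Submodule.exists_mem_ne_zero_of_ne_bot hS
  obtain ⟨r, hr, hr0⟩ := h.2 x x.2 (by simpa using hx0)
  refine (Submodule.ne_bot_iff _).mpr ⟨r • x, Submodule.mem_inf.mpr ⟨S.smul_mem r hxS, hr⟩, ?_⟩
  exact fun h0 => hr0 (by rw [← N.coe_smul, h0, N.coe_zero])

end Essential

theorem ModuleCat.exists_injective_essential_extension {R : Type u} [Ring R] (M : ModuleCat.{u} R) :
    ∃ (E : ModuleCat.{u} R) (i : M →ₗ[R] E), Module.Injective R E ∧ Function.Injective i ∧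
      ∀ S : Submodule R E, S ≠ ⊥ → S ⊓ range i ≠ ⊥ := by
  let E₀ : ModuleCat.{u} R := Injective.under M
  have : Injective (ModuleCat.of R E₀) := Injective.injective_under M
  have : Module.Injective R E₀ := Module.injective_module_of_injective_object R E₀
  let j : M →ₗ[R] E₀ := (Injective.ι M).hom
  have hj : Function.Injective j := (ModuleCat.mono_iff_injective _).mp inferInstance
  obtain ⟨H, hH⟩ := (range j).exists_maximal_isEssentialIn
  refine ⟨ModuleCat.of R H, j.codRestrict H fun x => hH.1.1 ⟨x, rfl⟩,
    Submodule.injective_of_maximal_isEssentialIn hH, fun x y hxy => hj congr($hxy.1), ?_⟩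
  intro S hS
  rw [range_codRestrict]
  exact hH.1.inf_comap_subtype_ne_bot hS

/-- characterizations of `n`-𝒳-injective modules via special 𝒳-purity. -/
theorem statement_0 (R : Type u) [Ring R] (𝒳 : Set (ModuleCat.{u} R)) (n : ℕ) (hn : 1 ≤ n)
    (M : ModuleCat.{u} R) :
    List.TFAE [
      -- (1) `M` is `n`-𝒳-injective
      IsNXInjective R 𝒳 n M,
      -- (2) every short exact sequence `0 → M → A → C → 0` is special 𝒳-pure
      ∀ (A C : ModuleCat.{u} R) (i : M →ₗ[R] A) (p : A →ₗ[R] C),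
        Function.Injective i → Function.Surjective p → Function.Exact i p →
        IsSpecialXPure R 𝒳 n i p,
      -- (3) `M` is special 𝒳-pure in every injective module containing it
      ∀ (E : ModuleCat.{u} R) (i : M →ₗ[R] E), Module.Injective R E → Function.Injective i →
        IsSpecialXPure R 𝒳 n i (LinearMap.range i).mkQ,
      -- (4) `M` is special 𝒳-pure in its injective envelope `E(M)`
      ∀ (E : ModuleCat.{u} R) (i : M →ₗ[R] E), Module.Injective R E → Function.Injective i →
        (∀ S : Submodule R E, S ≠ ⊥ → S ⊓ LinearMap.range i ≠ ⊥) →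
        IsSpecialXPure R 𝒳 n i (LinearMap.range i).mkQ
    ] := by
  obtain ⟨m, rfl⟩ : ∃ m, n = m + 1 := ⟨n - 1, (Nat.succ_pred_eq_of_pos hn).symm⟩
  tfae_have 1 → 2 := by
    intro h1 A C i p hi hp hip
    rw [isSpecialXPure_iff_forall_surjective hip hi]
    rintro K ⟨U, hU, hUpres, hK⟩
    have hext := (hK.extVanishes_succ_iff (freeCover_surjective K)).mp (h1 U hU hUpres)
    exact hip.exists_comp_eq_of_surjective_restrict hi hp (freeCover_surjective K) hext
  tfae_have 2 → 3 := fun h2 E i _ hi =>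
    h2 E (ModuleCat.of R (E ⧸ range i)) i _ hi (range i).mkQ_surjective (exact_map_mkQ_range i)
  tfae_have 3 → 4 := fun h3 E i hE hi _ => h3 E i hE hi
  tfae_have 4 → 1 := by
    intro h4 U hU hUpres
    obtain ⟨E, i, hE, hi, hess⟩ := ModuleCat.exists_injective_essential_extension M
    obtain ⟨K, hK⟩ := hUpres.of_succ.exists_isSyzygy
    have hpure := (isSpecialXPure_iff_forall_surjective (exact_map_mkQ_range i) hi).mp
      (h4 E i hE hi hess) K ⟨U, hU, hUpres, hK⟩
    rw [hK.extVanishes_succ_iff (freeCover_surjective K)]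
    exact (exact_map_mkQ_range i).surjective_restrict_of_exists_comp_eq hi
      (freeCover_surjective K) hpure
  tfae_finish
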